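/- Let V be a finite set with |V| = n, E⁺, E⁻ ⊆ binom(V,2), H := (V, E⁺ ∪ E⁻), and C := {X ∈ S₊^V : trace(X) = 1, X_{ij} ≥ 0 ∀ij ∈ E⁺, X_{ij} ≤ 0 ∀ij ∈ E⁻}. Then the set of vertices of C equals {e_k e_kᵀ : k ∈ V, deg_H(k) = n − 1}. -/

import Mathlib

open Matrix

/-- The normal cone, within the space of symmetric matrices (with the trace inner
product), of a set `C` of symmetric matrices at a point `X`. -/
def normalConeM {ι : Type*} [Fintype ι] (C : Set (Matrix ι ι ℝ)) (X : Matrix ι ι ℝ) :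
    Set (Matrix ι ι ℝ) :=
  {c | c.IsSymm ∧ ∀ Y ∈ C, (c * Y).trace ≤ (c * X).trace}

/-- A point of a convex set of symmetric matrices is a vertex if its normal cone is
full-dimensional in the space `Sym(ι)` of symmetric matrices, whose dimension is
`card ι * (card ι + 1) / 2`. -/
def IsVertex {ι : Type*} [Fintype ι] (C : Set (Matrix ι ι ℝ)) (X : Matrix ι ι ℝ) : Prop :=
  X ∈ C ∧ Module.finrank ℝ (Submodule.span ℝ (normalConeM C X))
      = Fintype.card ι * (Fintype.card ι + 1) / 2

/-!
A point `X` is a vertex exactly when no nonzero symmetric `W` is trace-orthogonal to the normal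
cone at `X`. If `X ∈ C` and `t ↦ P X Pᵀ / tr (P X Pᵀ)`, `P = 1 + t A`, stays in `C` for small `t`,
then `tr (c ·)` is maximal at `t = 0` for every `c` in the normal cone, so the derivative
`A X + X Aᵀ - tr (A X + X Aᵀ) X` is orthogonal to the cone and vanishes at a vertex.
For `A = eᵢ eᵢᵀ` the curve is a positive diagonal rescaling, which respects all sign constraints,
and this forces `X = eᵢ eᵢᵀ`. For `A = eₗ eₖᵀ` with `l` not adjacent to `k`, the curve
`(eₖ + t eₗ)(eₖ + t eₗ)ᵀ` only moves entries that no constraint sees, and the identity fails.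
Conversely, at `eₖ eₖᵀ` the normal cone contains `1`, every `-v vᵀ` with `vₖ = 0`, and
`±(eₖ eₗᵀ + eₗ eₖᵀ)` for every neighbour `l` of `k`; if `k` is adjacent to all other vertices,
only `W = 0` is orthogonal to all of these.
-/

open Filter Topology Module

lemma eq_zero_of_eventually_mul_add_sq_mul_nonpos {a b : ℝ}
    (h : ∀ᶠ t in 𝓝 (0 : ℝ), t * a + t ^ 2 * b ≤ 0) : a = 0 := by
  have hmax : IsLocalMax (fun t : ℝ => t * a + t ^ 2 * b) 0 := by
    filter_upwards [h] with t ht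
    simpa using ht
  have hderiv : HasDerivAt (fun t : ℝ => t * a + t ^ 2 * b) a 0 := by
    simpa using ((hasDerivAt_id' (0 : ℝ)).mul_const a).fun_add
      ((hasDerivAt_pow 2 (0 : ℝ)).mul_const b)
  exact hmax.hasDerivAt_eq_zero hderiv

namespace Matrix

section Symmetric

variable (ι R : Type*)

def symmetricSubmodule [CommSemiring R] : Submodule R (Matrix ι ι R) where
  carrier := {A | A.IsSymm}
  add_mem' := IsSymm.add
  zero_mem' := isSymm_zero
  smul_mem' c _ hA := hA.smul c

variable {ι R}

def symmetricSubmoduleEquiv [CommSemiring R] : symmetricSubmodule ι R ≃ₗ[R] (Sym2 ι → R) where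
  toFun A := Sym2.lift ⟨fun i j => (A : Matrix ι ι R) i j, fun i j => (A.2.apply i j).symm⟩
  map_add' A B := by
    funext s
    induction s using Sym2.ind
    simp
  map_smul' c A := by
    funext s
    induction s using Sym2.ind
    simp
  invFun f := ⟨of fun i j => f s(i, j), by ext i j; simp [Sym2.eq_swap]⟩
  left_inv A := by ext i j; simp
  right_inv f := by
    funext s
    induction s using Sym2.ind
    simp

lemma finrank_symmetricSubmodule [Fintype ι] [CommRing R] [StrongRankCondition R] :
    finrank R (symmetricSubmodule ι R) = Fintype.card ι * (Fintype.card ι + 1) / 2 := by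
  rw [symmetricSubmoduleEquiv.finrank_eq, Module.finrank_fintype_fun_eq_card, Sym2.card,
    Nat.choose_two_right, Nat.mul_comm]
  simp

end Symmetric

variable {ι R : Type*} [Fintype ι]

lemma finrank_span_eq_iff_forall_trace_mul_eq_zero {S : Set (Matrix ι ι ℝ)}
    (hS : ∀ c ∈ S, c.IsSymm) :
    finrank ℝ (Submodule.span ℝ S) = Fintype.card ι * (Fintype.card ι + 1) / 2 ↔
      ∀ W : Matrix ι ι ℝ, W.IsSymm → (∀ c ∈ S, (c * W).trace = 0) → W = 0 := by
  have hle : Submodule.span ℝ S ≤ symmetricSubmodule ι ℝ := Submodule.span_le.2 hS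
  rw [← finrank_symmetricSubmodule (R := ℝ)]
  constructor
  · intro hrank W hW horth
    have hspan : Submodule.span ℝ S = symmetricSubmodule ι ℝ :=
      Submodule.eq_of_le_of_finrank_eq hle hrank
    have hker : Submodule.span ℝ S ≤
        LinearMap.ker ((traceLinearMap ι ℝ ℝ).comp (LinearMap.mulRight ℝ W)) :=
      Submodule.span_le.2 fun c hc => by simpa using horth c hc
    have hWW : (W * W).trace = 0 := by
      simpa using hker (hspan ▸ hW : W ∈ Submodule.span ℝ S)
    rw [← trace_conjTranspose_mul_self_eq_zero_iff, conjTranspose_eq_transpose_of_trivial, hW.eq]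
    exact hWW
  · intro horth
    -- a proper subspace of `Sym(ι)` is annihilated by a nonzero `W` under `(c, W) ↦ tr (c W)`
    refine le_antisymm (Submodule.finrank_mono hle) (not_lt.1 fun hlt => ?_)
    let f : symmetricSubmodule ι ℝ →ₗ[ℝ] Module.Dual ℝ (Submodule.span ℝ S) :=
      LinearMap.mk₂ ℝ (fun W c => ((c : Matrix ι ι ℝ) * W).trace)
        (fun _ _ _ => by simp [Matrix.mul_add]) (fun _ _ _ => by simp)
        (fun _ _ _ => by simp [Matrix.add_mul]) (fun _ _ _ => by simp)
    obtain ⟨W, hWker, hW0⟩ := Submodule.ne_bot_iff _ |>.1 <|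
      f.ker_ne_bot_of_finrank_lt (by rwa [Subspace.dual_finrank_eq])
    refine hW0 (Subtype.ext (horth W W.2 fun c hc => ?_))
    exact LinearMap.congr_fun (LinearMap.mem_ker.1 hWker) ⟨c, Submodule.subset_span hc⟩

lemma trace_vecMulVec_self_mul [CommSemiring R] (v : ι → R) (M : Matrix ι ι R) :
    (vecMulVec v v * M).trace = v ⬝ᵥ M *ᵥ v := by
  rw [vecMulVec_mul, trace_vecMulVec, dotProduct_comm, dotProduct_mulVec]

variable [DecidableEq ι]

lemma one_add_smul_mul_mul_transpose [CommRing R] (A X : Matrix ι ι R) (t : R) :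
    (1 + t • A) * X * (1 + t • A)ᵀ = X + t • (A * X + X * Aᵀ) + t ^ 2 • (A * X * Aᵀ) := by
  simp only [transpose_add, transpose_one, transpose_smul, Matrix.add_mul, Matrix.mul_add,
    Matrix.one_mul, Matrix.mul_one, Matrix.smul_mul, Matrix.mul_smul, smul_add, smul_smul, pow_two]
  abel

lemma trace_single_add_single_mul [CommSemiring R] {M : Matrix ι ι R} (hM : M.IsSymm) (a b : ι) :
    ((single a b 1 + single b a 1) * M).trace = 2 * M a b := by
  rw [Matrix.add_mul, trace_add, trace_single_mul, trace_single_mul, hM.apply a b]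
  simp [two_mul]

lemma eq_single_of_diagonal_mul_add_mul_diagonal {X : Matrix ι ι ℝ} {i : ι} (hi : X i i ≠ 0)
    (h : diagonal (Pi.single i 1) * X + X * diagonal (Pi.single i 1) = (2 * X i i) • X) :
    X = single i i 1 := by
  have hentry : ∀ a b,
      ((Pi.single i 1 : ι → ℝ) a + (Pi.single i 1 : ι → ℝ) b) * X a b = 2 * X i i * X a b := by
    intro a b
    have := congr_fun₂ h a b
    simp only [add_apply, smul_apply, diagonal_mul, mul_diagonal, smul_eq_mul] at this
    linarith
  have hii : X i i = 1 := by
    have hentry_ii := hentry i i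
    simp only [Pi.single_eq_same] at hentry_ii
    have h2 : X i i * (X i i - 1) = 0 := by linear_combination -hentry_ii / 2
    exact sub_eq_zero.1 ((mul_eq_zero.1 h2).resolve_left hi)
  ext a b
  have hab := hentry a b
  rw [hii] at hab
  by_cases ha : a = i <;> by_cases hb : b = i
  · simp [ha, hb, hii]
  · subst ha
    simp only [Pi.single_eq_same, Pi.single_eq_of_ne hb] at hab
    rw [single_apply_of_col_ne _ _ (Ne.symm hb)]
    linarith
  · subst hb
    simp only [Pi.single_eq_same, Pi.single_eq_of_ne ha] at hab
    rw [single_apply_of_row_ne (Ne.symm ha)]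
    linarith
  · simp only [Pi.single_eq_of_ne ha, Pi.single_eq_of_ne hb] at hab
    rw [single_apply_of_row_ne (Ne.symm ha)]
    linarith

lemma IsSymm.eq_zero_of_quadratic_eq_zero_of_row_eq_zero {W : Matrix ι ι ℝ} (hW : W.IsSymm)
    (k : ι) (htr : W.trace = 0) (hquad : ∀ v : ι → ℝ, v k = 0 → v ⬝ᵥ W *ᵥ v = 0)
    (hrow : ∀ l ≠ k, W k l = 0) : W = 0 := by
  have hquad_single : ∀ a b, a ≠ k → b ≠ k → W a a + W a b + W b a + W b b = 0 := by
    intro a b ha hb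
    have h := hquad (Pi.single a 1 + Pi.single b 1) (by simp [ha.symm, hb.symm])
    simp only [add_dotProduct, dotProduct_add, mulVec_add, mulVec_single_one,
      single_one_dotProduct, col_apply] at h
    linarith
  have hoff : ∀ a b, a ≠ k → b ≠ k → W a b = 0 := by
    intro a b ha hb
    have haa := hquad_single a a ha ha
    have hbb := hquad_single b b hb hb
    have hab := hquad_single a b ha hb
    rw [hW.apply a b] at hab
    linarith
  have hkk : W k k = 0 := by
    rw [← htr]
    exact (Finset.sum_eq_single k (fun b _ hb => hoff b b hb hb) (by simp)).symm
  ext a b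
  by_cases ha : a = k <;> by_cases hb : b = k
  · subst ha hb
    exact hkk
  · subst ha
    exact hrow b hb
  · subst hb
    rw [hW.apply b a, hrow a ha, zero_apply]
  · exact hoff a b ha hb

end Matrix

lemma isVertex_iff {ι : Type*} [Fintype ι] {C : Set (Matrix ι ι ℝ)} {X : Matrix ι ι ℝ} :
    IsVertex C X ↔ X ∈ C ∧
      ∀ W : Matrix ι ι ℝ, W.IsSymm → (∀ c ∈ normalConeM C X, (c * W).trace = 0) → W = 0 :=
  and_congr_right' (finrank_span_eq_iff_forall_trace_mul_eq_zero fun _ hc => hc.1)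

def RespectsSigns {V : Type*} (Ep Em : Set (V × V)) (M : Matrix V V ℝ) : Prop :=
  (∀ e ∈ Ep, 0 ≤ M e.1 e.2) ∧ ∀ e ∈ Em, M e.1 e.2 ≤ 0

def signedSpectraplex {V : Type*} [Fintype V] (Ep Em : Set (V × V)) : Set (Matrix V V ℝ) :=
  {X | X.PosSemidef ∧ X.trace = 1 ∧ RespectsSigns Ep Em X}

section SignedSpectraplex

variable {V : Type*} {Ep Em : Set (V × V)}

lemma RespectsSigns.add {M N : Matrix V V ℝ} (hM : RespectsSigns Ep Em M)
    (hN : RespectsSigns Ep Em N) : RespectsSigns Ep Em (M + N) :=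
  ⟨fun e he => add_nonneg (hM.1 e he) (hN.1 e he),
    fun e he => add_nonpos (hM.2 e he) (hN.2 e he)⟩

lemma RespectsSigns.smul {M : Matrix V V ℝ} (hM : RespectsSigns Ep Em M) {r : ℝ} (hr : 0 ≤ r) :
    RespectsSigns Ep Em (r • M) :=
  ⟨fun e he => mul_nonneg hr (hM.1 e he),
    fun e he => mul_nonpos_of_nonneg_of_nonpos hr (hM.2 e he)⟩

lemma respectsSigns_of_forall_eq_zero {M : Matrix V V ℝ} (hM : ∀ e ∈ Ep ∪ Em, M e.1 e.2 = 0) :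
    RespectsSigns Ep Em M :=
  ⟨fun e he => (hM e (Or.inl he)).ge, fun e he => (hM e (Or.inr he)).le⟩

lemma respectsSigns_single_self [DecidableEq V] (hEm : ∀ e ∈ Em, e.1 ≠ e.2) (k : V) :
    RespectsSigns Ep Em (single k k (1 : ℝ)) := by
  refine ⟨fun e _ => ?_, fun e he => ?_⟩
  · rw [single_apply]; split_ifs <;> norm_num
  · rw [single_apply_of_ne]
    rintro ⟨rfl, h⟩
    exact hEm e he h

lemma RespectsSigns.diagonal_mul_mul_diagonal [Fintype V] [DecidableEq V] {M : Matrix V V ℝ}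
    (hM : RespectsSigns Ep Em M) {d : V → ℝ} (hd : 0 ≤ d) :
    RespectsSigns Ep Em (diagonal d * M * diagonal d) := by
  refine ⟨fun e he => ?_, fun e he => ?_⟩ <;> rw [mul_diagonal, diagonal_mul]
  · exact mul_nonneg (mul_nonneg (hd _) (hM.1 e he)) (hd _)
  · exact mul_nonpos_of_nonpos_of_nonneg
      (mul_nonpos_of_nonneg_of_nonpos (hd _) (hM.2 e he)) (hd _)

variable [Fintype V]

lemma inv_trace_smul_mem_signedSpectraplex {M : Matrix V V ℝ} (hM : M.PosSemidef)
    (hpos : 0 < M.trace) (hs : RespectsSigns Ep Em M) :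
    M.trace⁻¹ • M ∈ signedSpectraplex Ep Em :=
  ⟨hM.smul (inv_nonneg.2 hpos.le), by simp [trace_smul, hpos.ne'],
    hs.smul (inv_nonneg.2 hpos.le)⟩

lemma neg_vecMulVec_mem_normalConeM {X : Matrix V V ℝ} {v : V → ℝ}
    (hXv : v ⬝ᵥ X *ᵥ v = 0) : -vecMulVec v v ∈ normalConeM (signedSpectraplex Ep Em) X := by
  refine ⟨?_, fun Y hY => ?_⟩
  · simp [IsSymm]
  · rw [Matrix.neg_mul, Matrix.neg_mul, trace_neg, trace_neg, trace_vecMulVec_self_mul,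
      trace_vecMulVec_self_mul, hXv, neg_zero, neg_nonpos]
    simpa using hY.1.dotProduct_mulVec_nonneg v

variable [DecidableEq V]

lemma single_mem_signedSpectraplex (hEm : ∀ e ∈ Em, e.1 ≠ e.2) (k : V) :
    single k k 1 ∈ signedSpectraplex Ep Em :=
  ⟨diagonal_single k (1 : ℝ) ▸ PosSemidef.diagonal (Pi.single_nonneg.2 zero_le_one),
    trace_single_eq_same _ _, respectsSigns_single_self hEm k⟩

lemma one_mem_normalConeM {X : Matrix V V ℝ} (hX : X ∈ signedSpectraplex Ep Em) :
    1 ∈ normalConeM (signedSpectraplex Ep Em) X :=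
  ⟨isSymm_one, fun Y hY => by rw [Matrix.one_mul, Matrix.one_mul, hY.2.1, hX.2.1]⟩

lemma neg_single_add_single_mem_normalConeM {X : Matrix V V ℝ} {e : V × V} (he : e ∈ Ep)
    (hXe : X e.1 e.2 = 0) (hXsymm : X.IsSymm) :
    -(single e.1 e.2 1 + single e.2 e.1 1) ∈ normalConeM (signedSpectraplex Ep Em) X := by
  refine ⟨?_, fun Y hY => ?_⟩
  · simp [IsSymm, add_comm]
  · rw [Matrix.neg_mul, Matrix.neg_mul, trace_neg, trace_neg, trace_single_add_single_mul hXsymm,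
      trace_single_add_single_mul (isHermitian_iff_isSymm.1 hY.1.1), hXe]
    linarith [hY.2.2.1 e he]

lemma single_add_single_mem_normalConeM {X : Matrix V V ℝ} {e : V × V} (he : e ∈ Em)
    (hXe : X e.1 e.2 = 0) (hXsymm : X.IsSymm) :
    single e.1 e.2 1 + single e.2 e.1 1 ∈ normalConeM (signedSpectraplex Ep Em) X := by
  refine ⟨?_, fun Y hY => ?_⟩
  · simp [IsSymm, add_comm]
  · rw [trace_single_add_single_mul hXsymm,
      trace_single_add_single_mul (isHermitian_iff_isSymm.1 hY.1.1), hXe]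
    linarith [hY.2.2.2 e he]

lemma trace_mul_eq_of_mem_normalConeM {X c A : Matrix V V ℝ} (hX : X ∈ signedSpectraplex Ep Em)
    (hc : c ∈ normalConeM (signedSpectraplex Ep Em) X)
    (hA : ∀ᶠ t : ℝ in 𝓝 0, RespectsSigns Ep Em ((1 + t • A) * X * (1 + t • A)ᵀ)) :
    (c * (A * X + X * Aᵀ)).trace = (A * X + X * Aᵀ).trace * (c * X).trace := by
  set B := A * X + X * Aᵀ
  set Q := A * X * Aᵀ
  set s := (c * X).trace
  have htr : Tendsto (fun t : ℝ => 1 + t * B.trace + t ^ 2 * Q.trace) (𝓝 0) (𝓝 1) := by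
    have : Continuous fun t : ℝ => 1 + t * B.trace + t ^ 2 * Q.trace := by fun_prop
    simpa using this.tendsto 0
  have hquad : ∀ᶠ t in 𝓝 (0 : ℝ),
      t * ((c * B).trace - B.trace * s) + t ^ 2 * ((c * Q).trace - Q.trace * s) ≤ 0 := by
    filter_upwards [hA, htr.eventually (lt_mem_nhds one_pos)] with t hsigns hpos
    have hM := one_add_smul_mul_mul_transpose A X t
    have hMtr : ((1 + t • A) * X * (1 + t • A)ᵀ).trace = 1 + t * B.trace + t ^ 2 * Q.trace := by
      rw [hM, trace_add, trace_add, trace_smul, trace_smul, hX.2.1, smul_eq_mul, smul_eq_mul]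
    have hcM : (c * ((1 + t • A) * X * (1 + t • A)ᵀ)).trace
        = s + t * (c * B).trace + t ^ 2 * (c * Q).trace := by
      rw [hM, Matrix.mul_add, Matrix.mul_add, trace_add, trace_add, Matrix.mul_smul,
        Matrix.mul_smul, trace_smul, trace_smul, smul_eq_mul, smul_eq_mul]
    have hpsd : ((1 + t • A) * X * (1 + t • A)ᵀ).PosSemidef := by
      simpa only [conjTranspose_eq_transpose_of_trivial] using
        hX.1.mul_mul_conjTranspose_same (1 + t • A)
    have hle := hc.2 _ (inv_trace_smul_mem_signedSpectraplex hpsd (hMtr ▸ hpos) hsigns)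
    rw [Matrix.mul_smul, trace_smul, smul_eq_mul, inv_mul_le_iff₀ (hMtr ▸ hpos), hcM, hMtr] at hle
    linarith
  linarith [eq_zero_of_eventually_mul_add_sq_mul_nonpos hquad]

lemma mul_add_mul_transpose_eq_of_isVertex {X A : Matrix V V ℝ}
    (hv : IsVertex (signedSpectraplex Ep Em) X)
    (hA : ∀ᶠ t : ℝ in 𝓝 0, RespectsSigns Ep Em ((1 + t • A) * X * (1 + t • A)ᵀ)) :
    A * X + X * Aᵀ = (A * X + X * Aᵀ).trace • X := by
  obtain ⟨hX, horth⟩ := isVertex_iff.1 hv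
  have hXsymm : X.IsSymm := isHermitian_iff_isSymm.1 hX.1.1
  refine sub_eq_zero.1 (horth _ ?_ fun c hc => ?_)
  · simp [IsSymm, transpose_sub, transpose_add, transpose_mul, hXsymm.eq, add_comm]
  · rw [Matrix.mul_sub, trace_sub, Matrix.mul_smul, trace_smul, smul_eq_mul,
      trace_mul_eq_of_mem_normalConeM hX hc hA, sub_self]

lemma exists_eq_single_of_isVertex {X : Matrix V V ℝ}
    (hv : IsVertex (signedSpectraplex Ep Em) X) : ∃ k, X = single k k 1 := by
  have htr : X.trace ≠ 0 := hv.1.2.1 ▸ one_ne_zero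
  obtain ⟨i, -, hi⟩ := Finset.exists_ne_zero_of_sum_ne_zero htr
  refine ⟨i, eq_single_of_diagonal_mul_add_mul_diagonal hi ?_⟩
  have hA : ∀ᶠ t : ℝ in 𝓝 0, RespectsSigns Ep Em
      ((1 + t • diagonal (Pi.single i 1)) * X * (1 + t • diagonal (Pi.single i 1))ᵀ) := by
    filter_upwards [eventually_gt_nhds neg_one_lt_zero] with t ht
    have hdiag : 1 + t • diagonal (Pi.single i 1) = diagonal (1 + t • Pi.single i (1 : ℝ)) := by
      ext a b
      rcases eq_or_ne a b with rfl | hab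
      · simp
      · simp [hab]
    rw [hdiag, diagonal_transpose]
    refine hv.1.2.2.diagonal_mul_mul_diagonal fun a => ?_
    rcases eq_or_ne a i with rfl | ha
    · simp; linarith
    · simp [ha]
  simpa [diagonal_transpose, trace_add, trace, diagonal_mul, mul_diagonal, two_mul,
    Pi.single_apply, Finset.sum_add_distrib] using
    mul_add_mul_transpose_eq_of_isVertex hv hA

lemma adj_of_isVertex_single (hEm : ∀ e ∈ Em, e.1 ≠ e.2) {k l : V}
    (hv : IsVertex (signedSpectraplex Ep Em) (single k k 1)) (hlk : l ≠ k) :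
    (k, l) ∈ Ep ∪ Em ∨ (l, k) ∈ Ep ∪ Em := by
  by_contra hnadj
  have hoff : ∀ e ∈ Ep ∪ Em, (single l k 1 + single k l 1 : Matrix V V ℝ) e.1 e.2 = 0 := by
    rintro ⟨a, b⟩ he
    have h1 : ¬(l = a ∧ k = b) := by rintro ⟨rfl, rfl⟩; exact hnadj (Or.inr he)
    have h2 : ¬(k = a ∧ l = b) := by rintro ⟨rfl, rfl⟩; exact hnadj (Or.inl he)
    simp [single_apply_of_ne _ _ _ _ _ h1, single_apply_of_ne _ _ _ _ _ h2]
  have hA : ∀ᶠ t : ℝ in 𝓝 0, RespectsSigns Ep Em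
      ((1 + t • single l k 1) * single k k 1 * (1 + t • single l k 1)ᵀ) := by
    refine Eventually.of_forall fun t => ?_
    rw [one_add_smul_mul_mul_transpose, transpose_single, single_mul_single_same,
      single_mul_single_same, single_mul_single_same, one_mul, one_mul]
    refine (hv.1.2.2.add (respectsSigns_of_forall_eq_zero fun e he => ?_)).add
      ((respectsSigns_single_self hEm l).smul (sq_nonneg t))
    simp [hoff e he]
  have h := congr_fun₂ (mul_add_mul_transpose_eq_of_isVertex hv hA) l k
  simp [single_apply_of_row_ne hlk.symm] at h

lemma isVertex_single (hEm : ∀ e ∈ Em, e.1 ≠ e.2) {k : V}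
    (hadj : ∀ l ≠ k, (k, l) ∈ Ep ∪ Em ∨ (l, k) ∈ Ep ∪ Em) :
    IsVertex (signedSpectraplex Ep Em) (single k k 1) := by
  have hX := single_mem_signedSpectraplex (Ep := Ep) hEm k
  have hXsymm : (single k k (1 : ℝ)).IsSymm := by simp [IsSymm]
  refine isVertex_iff.2 ⟨hX, fun W hW horth => ?_⟩
  have hedge : ∀ e ∈ Ep ∪ Em, e.1 ≠ e.2 → W e.1 e.2 = 0 := by
    intro e he hne
    have hXe : single k k (1 : ℝ) e.1 e.2 = 0 :=
      single_apply_of_ne _ _ _ _ _ fun h => hne (h.1 ▸ h.2)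
    rcases he with he | he
    · have h := horth _ (neg_single_add_single_mem_normalConeM he hXe hXsymm)
      rw [Matrix.neg_mul, trace_neg, trace_single_add_single_mul hW] at h
      linarith
    · have h := horth _ (single_add_single_mem_normalConeM he hXe hXsymm)
      rw [trace_single_add_single_mul hW] at h
      linarith
  refine hW.eq_zero_of_quadratic_eq_zero_of_row_eq_zero k ?_ (fun v hv => ?_) (fun l hl => ?_)
  · simpa using horth 1 (one_mem_normalConeM hX)
  · have h := horth _ (neg_vecMulVec_mem_normalConeM (v := v) (by simp [single_mulVec, hv]))
    rw [Matrix.neg_mul, trace_neg, trace_vecMulVec_self_mul] at h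
    linarith
  · rcases hadj l hl with h | h
    · exact hedge _ h hl.symm
    · rw [← hW.apply]
      exact hedge _ h hl

end SignedSpectraplex

lemma ncard_ne_and_eq_card_sub_one_iff {V : Type*} [Fintype V] (k : V) (p : V → Prop) :
    {l | l ≠ k ∧ p l}.ncard = Fintype.card V - 1 ↔ ∀ l ≠ k, p l := by
  have hcard : {l | l ≠ k}.ncard = Fintype.card V - 1 := by
    rw [← Nat.card_eq_fintype_card, ← Set.ncard_univ,
      ← Set.ncard_sdiff_singleton_of_mem (Set.mem_univ k)]
    congr 1
    ext l
    simp
  rw [← hcard]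
  constructor
  · intro h l hl
    have hEq := Set.eq_of_subset_of_ncard_le (fun l (hl : l ≠ k ∧ p l) => hl.1) h.ge
    exact (hEq.symm ▸ hl : l ∈ {l | l ≠ k ∧ p l}).2
  · intro h
    congr 1
    ext l
    exact ⟨And.left, fun hl => ⟨hl, h l hl⟩⟩

theorem theta3_vertices_general {V : Type*} [Fintype V] [DecidableEq V]
    (Ep Em : Set (V × V)) (hEm : ∀ e ∈ Em, e.1 ≠ e.2)
    (C : Set (Matrix V V ℝ))
    (hC : C = {X | X.PosSemidef ∧ X.trace = 1 ∧
      (∀ e ∈ Ep, 0 ≤ X e.1 e.2) ∧ (∀ e ∈ Em, X e.1 e.2 ≤ 0)}) :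
    {X | X ∈ C ∧ IsVertex C X} =
      {X | ∃ k : V,
        {l : V | l ≠ k ∧ ((k, l) ∈ Ep ∪ Em ∨ (l, k) ∈ Ep ∪ Em)}.ncard
          = Fintype.card V - 1 ∧
        X = Matrix.vecMulVec (Pi.single k 1) (Pi.single k 1)} := by
  obtain rfl : C = signedSpectraplex Ep Em := hC
  ext X
  simp only [Set.mem_ofPred_eq, ← single_eq_single_vecMulVec_single,
    ncard_ne_and_eq_card_sub_one_iff]
  constructor
  · rintro ⟨-, hv⟩
    obtain ⟨k, rfl⟩ := exists_eq_single_of_isVertex hv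
    exact ⟨k, fun l hl => adj_of_isVertex_single hEm hv hl, rfl⟩
  · rintro ⟨k, hadj, rfl⟩
    exact ⟨(isVertex_single hEm hadj).1, isVertex_single hEm hadj⟩

theorem theta3_vertices {V : Type*} [Fintype V] [DecidableEq V]
    (Ep Em : Set (V × V)) (hEp : ∀ e ∈ Ep, e.1 ≠ e.2) (hEm : ∀ e ∈ Em, e.1 ≠ e.2)
    (C : Set (Matrix V V ℝ))
    (hC : C = {X | X.PosSemidef ∧ X.trace = 1 ∧
      (∀ e ∈ Ep, 0 ≤ X e.1 e.2) ∧ (∀ e ∈ Em, X e.1 e.2 ≤ 0)}) :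
    {X | X ∈ C ∧ IsVertex C X} =
      {X | ∃ k : V,
        {l : V | l ≠ k ∧ ((k, l) ∈ Ep ∪ Em ∨ (l, k) ∈ Ep ∪ Em)}.ncard
          = Fintype.card V - 1 ∧
        X = Matrix.vecMulVec (Pi.single k 1) (Pi.single k 1)} :=
  theta3_vertices_general Ep Em hEm C hC
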